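/- Any sequence z = (z_n) ∈ X_B with ‖z‖_B' ≤ ε satisfying x_{n+1} = F_n(x_n) + z_{n+1}^c for all n (where x_n = y_n + z_n^{s,u} and (y_n) is a (δ,B)-pseudotrajectory, δ = Lε) is a fixed point of the operator Φ = G ∘ S, where S(x)_n = g_{n−1}(x_{n−1}^{s,u}) with g_n(x) = f_n(x + y_n) − f_n(y_n) + F_n(y_n) − y_{n+1}. -/

import Mathlib

/-- A Banach sequence space over ℤ: a linear subspace of all real sequences indexed
by ℤ, equipped with a complete norm which is solid. -/
structure BanachSeqSpace where
  /-- membership in the subspace -/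
  mem : (ℤ → ℝ) → Prop
  /-- the norm -/
  N : (ℤ → ℝ) → ℝ
  zero_mem : mem 0
  add_mem : ∀ s t, mem s → mem t → mem (s + t)
  smul_mem : ∀ (a : ℝ) (s), mem s → mem (a • s)
  N_nonneg : ∀ s, 0 ≤ N s
  N_zero : N 0 = 0
  N_eq_zero : ∀ s, mem s → N s = 0 → s = 0
  N_add : ∀ s t, mem s → mem t → N (s + t) ≤ N s + N t
  N_smul : ∀ (a : ℝ) (s), mem s → N (a • s) = |a| * N s
  /-- solidity: if |s n| ≤ |t n| for all n and t belongs to the space,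
  then so does s, with N s ≤ N t -/
  solid : ∀ s t, mem t → (∀ n : ℤ, |s n| ≤ |t n|) → mem s ∧ N s ≤ N t
  /-- completeness: every Cauchy sequence in the space converges in the space -/
  complete : ∀ u : ℕ → (ℤ → ℝ), (∀ k, mem (u k)) →
    (∀ ε > (0 : ℝ), ∃ K : ℕ, ∀ j ≥ K, ∀ k ≥ K, N (u j - u k) ≤ ε) →
    ∃ v, mem v ∧ ∀ ε > (0 : ℝ), ∃ K : ℕ, ∀ k ≥ K, N (u k - v) ≤ ε

/-- An admissible Banach sequence space: additionally contains all singleton indicator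
sequences with positive norm and is invariant under shifts, which act isometrically. -/
structure AdmissibleBSS extends BanachSeqSpace where
  indicator_mem : ∀ n : ℤ, mem (fun k => if k = n then (1 : ℝ) else 0)
  indicator_pos : ∀ n : ℤ, 0 < N (fun k => if k = n then (1 : ℝ) else 0)
  shift_mem : ∀ (s : ℤ → ℝ) (m : ℤ), mem s → mem (fun n => s (n + m))
  shift_isometry : ∀ (s : ℤ → ℝ) (m : ℤ), mem s → N (fun n => s (n + m)) = N s
variable {X : Type*} [NormedAddCommGroup X] [NormedSpace ℝ X]

/-- The forward cocycle: `fcoc A n k = A (n+k-1) ∘ ⋯ ∘ A n`, so that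
`fcoc A n k = 𝒜(n+k, n)`. -/
def fcoc (A : ℤ → X →L[ℝ] X) (n : ℤ) : ℕ → (X →L[ℝ] X)
  | 0 => ContinuousLinearMap.id ℝ X
  | (k + 1) => (A (n + k)).comp (fcoc A n k)

/-- A partial exponential dichotomy for a sequence `(A_m)_{m ∈ ℤ}` of bounded linear
operators: projections `P¹, P², P³` summing to the identity and commuting with the
dynamics, with the dynamics invertible along the unstable direction (witnessed by the
backward cocycle `V m n = 𝒜(m,n)P_n²` for `m ≤ n`), and exponential bounds. -/
structure PartialDichotomy (A : ℤ → X →L[ℝ] X) where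
  P1 : ℤ → X →L[ℝ] X
  P2 : ℤ → X →L[ℝ] X
  P3 : ℤ → X →L[ℝ] X
  D : ℝ
  b : ℝ
  d : ℝ
  hD : 0 < D
  hb : 0 < b
  hd : 0 < d
  proj1 : ∀ n, (P1 n).comp (P1 n) = P1 n
  proj2 : ∀ n, (P2 n).comp (P2 n) = P2 n
  proj3 : ∀ n, (P3 n).comp (P3 n) = P3 n
  sum_eq : ∀ n (x : X), P1 n x + P2 n x + P3 n x = x
  comm1 : ∀ n, (A n).comp (P1 n) = (P1 (n + 1)).comp (A n)
  comm2 : ∀ n, (A n).comp (P2 n) = (P2 (n + 1)).comp (A n)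
  comm3 : ∀ n, (A n).comp (P3 n) = (P3 (n + 1)).comp (A n)
  /-- the backward cocycle along the unstable direction, `V m n = 𝒜(m,n)P_n²` for `m ≤ n` -/
  V : ℤ → ℤ → X →L[ℝ] X
  V_self : ∀ n, V n n = P2 n
  V_proj : ∀ m n, m ≤ n → (V m n).comp (P2 n) = V m n
  V_range : ∀ m n, m ≤ n → (P2 m).comp (V m n) = V m n
  /-- `𝒜(n,m) ∘ 𝒜(m,n)P_n² = P_n²`: `V m n` inverts the forward dynamics -/
  V_right_inv : ∀ m n, m ≤ n → (fcoc A m (n - m).toNat).comp (V m n) = P2 n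
  /-- `𝒜(m,n) ∘ 𝒜(n,m)P_m² = P_m²` -/
  V_left_inv : ∀ m n, m ≤ n → (V m n).comp ((fcoc A m (n - m).toNat).comp (P2 m)) = P2 m
  /-- `‖𝒜(m,n)P_n¹‖ ≤ D e^{-d(m-n)}` for `m ≥ n` -/
  bound1 : ∀ (n : ℤ) (k : ℕ), ‖(fcoc A n k).comp (P1 n)‖ ≤ D * Real.exp (-d * k)
  /-- `‖𝒜(m,n)P_n²‖ ≤ D e^{-b(n-m)}` for `m ≤ n` -/
  bound2 : ∀ m n, m ≤ n → ‖V m n‖ ≤ D * Real.exp (-b * (n - m))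

/-- Membership in `X_B`: the sequence of norms belongs to `B`. -/
def memXB (B : BanachSeqSpace) (x : ℤ → X) : Prop := B.mem (fun n => ‖x n‖)

/-- The norm on `X_B`. -/
def NXB (B : BanachSeqSpace) (x : ℤ → X) : ℝ := B.N (fun n => ‖x n‖)

/-- Membership in the stable-unstable subspace `X_B^{s,u}`. -/
def memXBsu (B : BanachSeqSpace) {A : ℤ → X →L[ℝ] X} (pd : PartialDichotomy A)
    (x : ℤ → X) : Prop :=
  memXB B x ∧ ∀ n : ℤ, x n = pd.P1 n (x n) + pd.P2 n (x n)

/-- The central component `x^c` of a sequence: `(x^c)_n = P_n³ x_n`. -/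
def centr {A : ℤ → X →L[ℝ] X} (pd : PartialDichotomy A) (x : ℤ → X) : ℤ → X :=
  fun n => pd.P3 n (x n)

/-- The stable-unstable component `x^{s,u}` of a sequence: `(x^{s,u})_n = x_n − P_n³ x_n`. -/
def stun {A : ℤ → X →L[ℝ] X} (pd : PartialDichotomy A) (x : ℤ → X) : ℤ → X :=
  fun n => x n - pd.P3 n (x n)

/-- The adapted norm `‖x‖'_B = max{‖x^c‖_B, ‖x^{s,u}‖_B}` on `X_B`. -/
def Nadapt (B : BanachSeqSpace) {A : ℤ → X →L[ℝ] X} (pd : PartialDichotomy A)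
    (x : ℤ → X) : ℝ :=
  max (NXB B (centr pd x)) (NXB B (stun pd x))

/-!
Along the quasi-trajectory `y + z^{s,u}`, the trajectory equation turns `S z` into
`(S z)_n = z^{s,u}_n − A_{n−1} z^{s,u}_{n−1} − z^c_n`. Since the `P³` commute with the dynamics,
the central part of `S z` is `−z^c` and its stable-unstable part is exactly the right-hand side of
the difference equation characterizing `𝔸` at `z^{s,u}`, so `G (S z) = z^c + z^{s,u} = z`.
That `S z` lies in `X_B` follows from the Lipschitz bound on `f`, the pseudotrajectory
condition and shift invariance of `B`.
-/

namespace PartialDichotomy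

variable {A : ℤ → X →L[ℝ] X} (pd : PartialDichotomy A)

theorem norm_P1_le (n : ℤ) : ‖pd.P1 n‖ ≤ pd.D := by
  simpa [fcoc] using pd.bound1 n 0

theorem norm_P2_le (n : ℤ) : ‖pd.P2 n‖ ≤ pd.D := by
  simpa [pd.V_self] using pd.bound2 n n le_rfl

theorem P3_P3_apply (n : ℤ) (v : X) : pd.P3 n (pd.P3 n v) = pd.P3 n v :=
  congrArg (fun T : X →L[ℝ] X => T v) (pd.proj3 n)

theorem P3_sub_P3_apply (n : ℤ) (v : X) : pd.P3 n (v - pd.P3 n v) = 0 := by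
  rw [map_sub, P3_P3_apply, sub_self]

theorem sub_P3_apply (n : ℤ) (v : X) : v - pd.P3 n v = pd.P1 n v + pd.P2 n v := by
  rw [← add_sub_cancel_right (pd.P1 n v + pd.P2 n v) (pd.P3 n v), pd.sum_eq]

theorem P3_succ_A_sub_P3_apply (n : ℤ) (v : X) :
    pd.P3 (n + 1) (A n (v - pd.P3 n v)) = 0 := by
  rw [← ContinuousLinearMap.comp_apply, ← pd.comm3, ContinuousLinearMap.comp_apply,
    P3_sub_P3_apply, map_zero]

theorem norm_sub_P3_apply_le (n : ℤ) (v : X) : ‖v - pd.P3 n v‖ ≤ 2 * pd.D * ‖v‖ :=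
  calc ‖v - pd.P3 n v‖ ≤ ‖pd.P1 n v‖ + ‖pd.P2 n v‖ := sub_P3_apply pd n v ▸ norm_add_le _ _
    _ ≤ pd.D * ‖v‖ + pd.D * ‖v‖ :=
      add_le_add ((pd.P1 n).le_of_opNorm_le (pd.norm_P1_le n) v)
        ((pd.P2 n).le_of_opNorm_le (pd.norm_P2_le n) v)
    _ = 2 * pd.D * ‖v‖ := by ring

end PartialDichotomy

section Components

variable {A : ℤ → X →L[ℝ] X} (pd : PartialDichotomy A)

theorem centr_add_stun (x : ℤ → X) : centr pd x + stun pd x = x := by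
  funext n
  exact add_sub_cancel _ _

theorem stun_apply_eq_P1_add_P2 (x : ℤ → X) (n : ℤ) :
    stun pd x n = pd.P1 n (stun pd x n) + pd.P2 n (stun pd x n) := by
  conv_lhs => rw [← pd.sum_eq n (stun pd x n)]
  rw [stun, pd.P3_sub_P3_apply, add_zero]

variable {pd} {x w : ℤ → X}

theorem centr_eq_neg_of_apply_eq
    (hw : ∀ n, w n = stun pd x n - A (n - 1) (stun pd x (n - 1)) - centr pd x n) :
    centr pd w = -centr pd x := by
  funext n
  have hA : pd.P3 n (A (n - 1) (stun pd x (n - 1))) = 0 := by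
    have h := pd.P3_succ_A_sub_P3_apply (n - 1) (x (n - 1))
    rwa [sub_add_cancel] at h
  simp only [centr, Pi.neg_apply, hw, map_sub, hA, pd.P3_P3_apply]
  rw [stun, pd.P3_sub_P3_apply]
  abel

theorem stun_eq_of_apply_eq
    (hw : ∀ n, w n = stun pd x n - A (n - 1) (stun pd x (n - 1)) - centr pd x n) :
    stun pd w = fun n => stun pd x n - A (n - 1) (stun pd x (n - 1)) := by
  funext n
  have hc : pd.P3 n (w n) = -centr pd x n := congrFun (centr_eq_neg_of_apply_eq hw) n
  rw [stun, hc, hw]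
  abel

end Components

section SequenceSpace

variable {E : Type*} [NormedAddCommGroup E] {B : BanachSeqSpace}

theorem memXB_of_norm_le {x : ℤ → E} {t : ℤ → ℝ} (ht : B.mem t) (h : ∀ n, ‖x n‖ ≤ t n) :
    memXB B x :=
  (B.solid _ t ht fun n => by
    rw [abs_norm]
    exact (h n).trans (le_abs_self _)).1

theorem memXB_of_norm_le_smul_add {x u v : ℤ → E} (hu : memXB B u) (hv : memXB B v) (c : ℝ)
    (h : ∀ n, ‖x n‖ ≤ c * ‖u n‖ + ‖v n‖) : memXB B x :=
  memXB_of_norm_le (B.add_mem _ _ (B.smul_mem c _ hu) hv) h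

theorem memXBsu_stun {A : ℤ → X →L[ℝ] X} (pd : PartialDichotomy A) {x : ℤ → X}
    (hx : memXB B x) : memXBsu B pd (stun pd x) :=
  ⟨memXB_of_norm_le (B.smul_mem (2 * pd.D) _ hx) (fun n => pd.norm_sub_P3_apply_le n (x n)),
    stun_apply_eq_P1_add_P2 pd x⟩

theorem AdmissibleBSS.memXB_shift {B : AdmissibleBSS} {x : ℤ → E}
    (hx : memXB B.toBanachSeqSpace x) (m : ℤ) :
    memXB B.toBanachSeqSpace (fun n => x (n + m)) :=
  B.shift_mem _ m hx

end SequenceSpace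

theorem norm_lipschitz_increment_add_sub_le {E : Type*} [NormedAddCommGroup E] {f : E → E}
    {c : ℝ} (hf : ∀ a b, ‖f a - f b‖ ≤ c * ‖a - b‖) (u y p q : E) :
    ‖f (u + y) - f y + p - q‖ ≤ c * ‖u‖ + ‖q - p‖ :=
  calc ‖f (u + y) - f y + p - q‖ = ‖(f (u + y) - f y) - (q - p)‖ := by abel_nf
    _ ≤ ‖f (u + y) - f y‖ + ‖q - p‖ := norm_sub_le _ _
    _ ≤ c * ‖u‖ + ‖q - p‖ := by simpa using add_le_add_left (hf (u + y) y) ‖q - p‖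

theorem lipschitz_increment_eq_of_step {T : X →L[ℝ] X} {f : X → X} {y y' u u' w : X}
    (hstep : y' + u' = T (y + u) + f (y + u) + w) :
    f (u + y) - f y + (T y + f y) - y' = u' - T u - w := by
  have hfu : f (y + u) = y' + u' - T y - T u - w := by
    rw [hstep, map_add]
    abel
  rw [add_comm u y, hfu]
  abel

theorem quasi_shadow_is_fixed_point_general
    (X : Type*) [NormedAddCommGroup X] [NormedSpace ℝ X]
    (B : AdmissibleBSS) (A : ℤ → X →L[ℝ] X) (pd : PartialDichotomy A)
    (c : ℝ)
    (f : ℤ → X → X) (hf : ∀ (n : ℤ) (x y : X), ‖f n x - f n y‖ ≤ c * ‖x - y‖)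
    (F : ℤ → X → X) (hF : ∀ (n : ℤ) (x : X), F n x = A n x + f n x)
    (𝔸 : (ℤ → X) → (ℤ → X))
    (h𝔸char : ∀ x y, memXBsu B.toBanachSeqSpace pd x → memXBsu B.toBanachSeqSpace pd y →
      (𝔸 y = x ↔ ∀ n : ℤ, x n - A (n - 1) (x (n - 1)) = y n))
    (G : (ℤ → X) → (ℤ → X))
    (hG : ∀ x : ℤ → X, G x = -centr pd x + 𝔸 (stun pd x))
    -- the quasi-shadowing constant and the pseudotrajectory
    (L : ℝ) (ε : ℝ)
    (y : ℤ → X)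
    (hy1 : memXB B.toBanachSeqSpace (fun n => y (n + 1) - F n (y n)))
    -- the maps g and S
    (g : ℤ → X → X)
    (hg : ∀ (n : ℤ) (x : X), g n x = f n (x + y n) - f n (y n) + F n (y n) - y (n + 1))
    (S : (ℤ → X) → (ℤ → X))
    (hS : ∀ (x : ℤ → X) (n : ℤ), S x n = g (n - 1) (stun pd x (n - 1))) :
    ∀ z : ℤ → X,
      memXB B.toBanachSeqSpace z →
      Nadapt B.toBanachSeqSpace pd z ≤ ε →
      (∀ n : ℤ, y (n + 1) + stun pd z (n + 1)
        = F n (y n + stun pd z n) + centr pd z (n + 1)) →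
      G (S z) = z := by
  intro z hz _ htraj
  have hSz : ∀ n, S z n = stun pd z n - A (n - 1) (stun pd z (n - 1)) - centr pd z n := by
    intro n
    rw [hS, hg, hF, lipschitz_increment_eq_of_step (by rw [← hF]; exact htraj (n - 1)),
      sub_add_cancel]
  have hgz : memXB B.toBanachSeqSpace (fun n => g n (stun pd z n)) :=
    memXB_of_norm_le_smul_add (memXBsu_stun pd hz).1 hy1 c fun n => by
      rw [hg]
      exact norm_lipschitz_increment_add_sub_le (hf n) _ _ _ _
  have hSmem : memXB B.toBanachSeqSpace (S z) := by
    rw [show S z = _ from funext (hS z)]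
    simpa only [← sub_eq_add_neg] using AdmissibleBSS.memXB_shift hgz (-1)
  have h𝔸 : 𝔸 (stun pd (S z)) = stun pd z :=
    (h𝔸char _ _ (memXBsu_stun pd hz) (memXBsu_stun pd hSmem)).2 fun n =>
      (congrFun (stun_eq_of_apply_eq hSz) n).symm
  rw [hG, h𝔸, centr_eq_neg_of_apply_eq hSz, neg_neg, centr_add_stun]

theorem quasi_shadow_is_fixed_point
    (X : Type*) [NormedAddCommGroup X] [NormedSpace ℝ X] [CompleteSpace X]
    (B : AdmissibleBSS) (A : ℤ → X →L[ℝ] X) (pd : PartialDichotomy A)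
    (c : ℝ) (hc : 0 ≤ c)
    (f : ℤ → X → X) (hf : ∀ (n : ℤ) (x y : X), ‖f n x - f n y‖ ≤ c * ‖x - y‖)
    (F : ℤ → X → X) (hF : ∀ (n : ℤ) (x : X), F n x = A n x + f n x)
    (𝔸 : (ℤ → X) → (ℤ → X))
    (h𝔸map : ∀ y, memXBsu B.toBanachSeqSpace pd y → memXBsu B.toBanachSeqSpace pd (𝔸 y))
    (h𝔸char : ∀ x y, memXBsu B.toBanachSeqSpace pd x → memXBsu B.toBanachSeqSpace pd y →
      (𝔸 y = x ↔ ∀ n : ℤ, x n - A (n - 1) (x (n - 1)) = y n))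
    (G : (ℤ → X) → (ℤ → X))
    (hG : ∀ x : ℤ → X, G x = -centr pd x + 𝔸 (stun pd x))
    (normG : ℝ) (hnormG0 : 0 < normG)
    (hnormG : ∀ x, memXB B.toBanachSeqSpace x →
      Nadapt B.toBanachSeqSpace pd (G x) ≤ normG * Nadapt B.toBanachSeqSpace pd x)
    (hsmall : 4 * c * pd.D * (1 + 2 * pd.D) * normG < 1)
    -- the quasi-shadowing constant and the pseudotrajectory
    (L : ℝ) (hL : 0 < L) (ε : ℝ) (hε : 0 < ε) (δ : ℝ) (hδ : δ = L * ε)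
    (y : ℤ → X)
    (hy1 : memXB B.toBanachSeqSpace (fun n => y (n + 1) - F n (y n)))
    (hy2 : NXB B.toBanachSeqSpace (fun n => y (n + 1) - F n (y n)) ≤ δ)
    -- the maps g and S
    (g : ℤ → X → X)
    (hg : ∀ (n : ℤ) (x : X), g n x = f n (x + y n) - f n (y n) + F n (y n) - y (n + 1))
    (S : (ℤ → X) → (ℤ → X))
    (hS : ∀ (x : ℤ → X) (n : ℤ), S x n = g (n - 1) (stun pd x (n - 1))) :
    ∀ z : ℤ → X,
      memXB B.toBanachSeqSpace z →
      Nadapt B.toBanachSeqSpace pd z ≤ ε →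
      (∀ n : ℤ, y (n + 1) + stun pd z (n + 1)
        = F n (y n + stun pd z n) + centr pd z (n + 1)) →
      G (S z) = z :=
  quasi_shadow_is_fixed_point_general X B A pd c f hf F hF 𝔸 h𝔸char G hG L ε y hy1 g hg S hS
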